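/- arXiv:0906.4526 — 4 statements merged into one kernel-verified Lean document; each statement's English description precedes it below -/
import Mathlib

section
/- Let H be a complex Hilbert space and let U_1, …, U_n be bounded normal operators on H that pairwise commute and satisfy ∑_{j=1}^n U_j U_j* = I (i.e., they form a spherical unitary). If A is a bounded operator on H satisfying ∑_{j=1}^n U_j A U_j* = A, then A commutes with U_j and with U_j* for every 1 ≤ j ≤ n (equivalently, A lies in the commutant of the C*-algebra generated by U_1, …, U_n). -/
/-!
Let `Φ X = ∑ⱼ Uⱼ X Uⱼ*`; it is additive, order preserving, and fixes the scalars because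
`∑ⱼ Uⱼ Uⱼ* = 1`. For a fixed point `X` of `Φ` a direct expansion gives
`Φ (X* X) = X* X + ∑ᵢ Eᵢ* Eᵢ` with `Eᵢ = [Uᵢ*, X]`. By Fuglede's theorem the `Uⱼ` also commute
with the `Uᵢ*`, so each `Eᵢ` is again a fixed point, whence `Eᵢ* Eᵢ ≤ Φ (Eᵢ* Eᵢ)`. Iterating,
`X* X + k Eᵢ* Eᵢ ≤ Φᵏ (X* X) ≤ ‖X‖²` for every `k`, which forces `Eᵢ = 0`. Applied to `X*`
this also gives `[Uᵢ, X] = 0`.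
-/

theorem add_nsmul_le_iterate {M F : Type*} [AddCommMonoid M] [PartialOrder M]
    [IsOrderedAddMonoid M] [FunLike F M M] [AddMonoidHomClass F M M] {f : F} (hf : Monotone f)
    {P Q : M} (hP : P + Q ≤ f P) (hQ : Q ≤ f Q) (k : ℕ) : P + k • Q ≤ f^[k] P := by
  induction k with
  | zero => simp
  | succ k ih =>
    calc P + (k + 1) • Q = (P + Q) + k • Q := by rw [succ_nsmul']; abel
      _ ≤ f P + k • f Q := by gcongr
      _ = f (P + k • Q) := by rw [map_add, map_nsmul]
      _ ≤ f^[k + 1] P := by rw [Function.iterate_succ_apply']; exact hf ih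

theorem CStarAlgebra.eq_zero_of_forall_nsmul_le {A : Type*} [NonUnitalCStarAlgebra A]
    [PartialOrder A] [StarOrderedRing A] {a b : A} (ha : 0 ≤ a) (h : ∀ k : ℕ, k • a ≤ b) :
    a = 0 := by
  by_contra hne
  obtain ⟨k, hk⟩ := exists_lt_nsmul (norm_pos_iff.mpr hne) ‖b‖
  have := CStarAlgebra.norm_le_norm_of_nonneg_of_le (nsmul_nonneg ha k) (h k)
  rw [RCLike.norm_nsmul ℂ] at this
  exact (hk.trans_le this).false

section Ring

variable {A : Type*} [Ring A] [StarRing A] {n : ℕ} {U : Fin n → A}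

def conjSum (U : Fin n → A) : A →+ A :=
  ∑ j, (AddMonoidHom.mulRight (star (U j))).comp (AddMonoidHom.mulLeft (U j))

theorem conjSum_apply (X : A) : conjSum U X = ∑ j, U j * X * star (U j) := by
  simp [conjSum]

theorem star_conjSum (X : A) : star (conjSum U X) = conjSum U (star X) := by
  simp [conjSum_apply, star_sum, mul_assoc]

theorem conjSum_star_of_eq_self {X : A} (hX : conjSum U X = X) :
    conjSum U (star X) = star X := by
  rw [← star_conjSum, hX]

theorem conjSum_algebraMap {R : Type*} [CommSemiring R] [Algebra R A]
    (hsum : ∑ j, U j * star (U j) = 1) (r : R) :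
    conjSum U (algebraMap R A r) = algebraMap R A r := by
  simp_rw [conjSum_apply, ← Algebra.commutes, mul_assoc, ← Finset.mul_sum, hsum, mul_one]

theorem conjSum_lie {V : A} (hV : ∀ j, Commute V (U j) ∧ Commute V (star (U j))) (X : A) :
    conjSum U ⁅V, X⁆ = ⁅V, conjSum U X⁆ := by
  simp only [conjSum_apply, Ring.lie_def, Finset.mul_sum, Finset.sum_mul,
    ← Finset.sum_sub_distrib]
  refine Finset.sum_congr rfl fun j _ => ?_
  rw [mul_sub, sub_mul, ← mul_assoc, ← (hV j).1.eq, mul_assoc (U j * X), ← (hV j).2.eq]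
  simp only [mul_assoc]

theorem conjSum_star_mul_self (hsum : ∑ j, U j * star (U j) = 1) {X : A}
    (hX : conjSum U X = X) :
    conjSum U (star X * X) = star X * X + ∑ i, star ⁅star (U i), X⁆ * ⁅star (U i), X⁆ := by
  have expand (i : Fin n) : star ⁅star (U i), X⁆ * ⁅star (U i), X⁆ =
      star X * (U i * star (U i)) * X - star X * (U i * X * star (U i))
        - U i * star X * star (U i) * X + U i * (star X * X) * star (U i) := by
    simp only [Ring.lie_def, star_sub, star_mul, star_star]
    noncomm_ring
  simp only [expand, Finset.sum_add_distrib, Finset.sum_sub_distrib, ← Finset.sum_mul,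
    ← Finset.mul_sum, hsum, ← conjSum_apply, hX, conjSum_star_of_eq_self hX]
  noncomm_ring

variable [PartialOrder A] [StarOrderedRing A]

theorem conjSum_monotone : Monotone (conjSum U) := fun X Y h => by
  simpa only [conjSum_apply] using
    Finset.sum_le_sum fun j _ => star_right_conjugate_le_conjugate h (U j)

theorem star_mul_self_le_conjSum (hsum : ∑ j, U j * star (U j) = 1) {X : A}
    (hX : conjSum U X = X) : star X * X ≤ conjSum U (star X * X) := by
  rw [conjSum_star_mul_self hsum hX]
  exact le_add_of_nonneg_right (Finset.sum_nonneg fun i _ => star_mul_self_nonneg _)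

theorem star_mul_self_add_star_lie_mul_lie_le_conjSum (hsum : ∑ j, U j * star (U j) = 1)
    {X : A} (hX : conjSum U X = X) (i : Fin n) :
    star X * X + star ⁅star (U i), X⁆ * ⁅star (U i), X⁆ ≤ conjSum U (star X * X) := by
  rw [conjSum_star_mul_self hsum hX]
  gcongr
  exact Finset.single_le_sum (f := fun i => star ⁅star (U i), X⁆ * ⁅star (U i), X⁆)
    (fun i _ => star_mul_self_nonneg _) (Finset.mem_univ i)

end Ring

section CStarAlgebra

variable {A : Type*} [CStarAlgebra A] [PartialOrder A] [StarOrderedRing A] {n : ℕ}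
  {U : Fin n → A}

theorem commute_star_of_conjSum_eq_self (hcomm : ∀ i j, Commute (U i) (U j))
    (hdouble : ∀ i j, Commute (U i) (star (U j))) (hsum : ∑ j, U j * star (U j) = 1) {X : A}
    (hX : conjSum U X = X) (i : Fin n) : Commute (star (U i)) X := by
  set E := ⁅star (U i), X⁆
  have hE : conjSum U E = E := by
    rw [conjSum_lie (fun j => ⟨(hdouble j i).symm, commute_star_star.2 (hcomm i j)⟩), hX]
  have lower (k : ℕ) : star X * X + k • (star E * E) ≤ (conjSum U)^[k] (star X * X) :=
    add_nsmul_le_iterate conjSum_monotone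
      (star_mul_self_add_star_lie_mul_lie_le_conjSum hsum hX i)
      (star_mul_self_le_conjSum hsum hE) k
  have upper (k : ℕ) : (conjSum U)^[k] (star X * X) ≤ algebraMap ℝ A (‖X‖ ^ 2) :=
    (conjSum_monotone.iterate k CStarAlgebra.star_mul_le_algebraMap_norm_sq).trans_eq
      (Function.iterate_fixed (conjSum_algebraMap hsum _) k)
  have hEE : star E * E = 0 :=
    CStarAlgebra.eq_zero_of_forall_nsmul_le (star_mul_self_nonneg E) fun k =>
      (le_add_of_nonneg_left (star_mul_self_nonneg X)).trans ((lower k).trans (upper k))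
  rw [commute_iff_lie_eq]
  exact (CStarRing.star_mul_self_eq_zero_iff E).1 hEE

theorem commute_of_conjSum_eq_self [∀ i, IsStarNormal (U i)]
    (hcomm : ∀ i j, Commute (U i) (U j)) (hsum : ∑ j, U j * star (U j) = 1) {X : A}
    (hX : conjSum U X = X) (j : Fin n) : Commute X (U j) ∧ Commute X (star (U j)) := by
  have hdouble (i j : Fin n) : Commute (U i) (star (U j)) :=
    IsStarNormal.commute_star_right inferInstance (hcomm i j)
  exact ⟨commute_star_star.1 (commute_star_of_conjSum_eq_self hcomm hdouble hsum
      (conjSum_star_of_eq_self hX) j).symm,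
    (commute_star_of_conjSum_eq_self hcomm hdouble hsum hX j).symm⟩

end CStarAlgebra

open ContinuousLinearMap in
/-- **Davie–Jewell lemma.**  If `U₁, …, Uₙ` is a spherical unitary (pairwise commuting
normal operators with `∑ Uⱼ Uⱼ* = 1`) on a complex Hilbert space `H`, and `A` is a bounded
operator with `∑ Uⱼ A Uⱼ* = A`, then `A` commutes with every `Uⱼ` and every `Uⱼ*`. -/
theorem spherical_unitary_commutant
    {H : Type*} [NormedAddCommGroup H] [InnerProductSpace ℂ H] [CompleteSpace H]
    {n : ℕ} (U : Fin n → H →L[ℂ] H)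
    (hcomm : ∀ i j, U i * U j = U j * U i)
    (hnormal : ∀ i, U i * star (U i) = star (U i) * U i)
    (hsum : ∑ j, U j * star (U j) = 1)
    (A : H →L[ℂ] H)
    (hA : ∑ j, U j * A * star (U j) = A) :
    ∀ j, A * U j = U j * A ∧ A * star (U j) = star (U j) * A := by
  have (i : Fin n) : IsStarNormal (U i) := ⟨(hnormal i).symm⟩
  intro j
  obtain ⟨hU, hUstar⟩ := commute_of_conjSum_eq_self hcomm hsum (by rwa [conjSum_apply]) j
  exact ⟨hU.eq, hUstar.eq⟩
end

section
/- Let H be a complex Hilbert space and let U_1, …, U_n be bounded operators on H with ∑_{j=1}^n U_j U_j* = I. Suppose B is a bounded operator on H satisfying ∑_{j=1}^n U_j B U_j* = B. Then for all vectors x = (x_1, …, x_n) and y = (y_1, …, y_n) in ℂ^n with ∑_{j=1}^n |x_j|² ≤ 1, one has |1 − ∑_{j=1}^n x_j conj(y_j)| · ‖B‖ ≤ ∑_{j=1}^n ( ‖(U_j − x_j I) B‖ + ‖B (U_j* − conj(y_j) I)‖ ). -/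
/-- The key inequality in the proof of the Davie–Jewell lemma.  If `∑ Uⱼ Uⱼ* = 1` and
`∑ Uⱼ B Uⱼ* = B`, then for all `x, y ∈ ℂⁿ` with `∑ |xⱼ|² ≤ 1`,
`|1 − ⟨x,y⟩| ‖B‖ ≤ ∑ (‖(Uⱼ − xⱼI)B‖ + ‖B(Uⱼ* − conj(yⱼ)I)‖)`. -/
theorem spherical_unitary_harmonic_estimate
    {H : Type*} [NormedAddCommGroup H] [InnerProductSpace ℂ H] [CompleteSpace H]
    {n : ℕ} (U : Fin n → H →L[ℂ] H)
    (hsum : ∑ j, U j * star (U j) = 1)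
    (B : H →L[ℂ] H)
    (hB : ∑ j, U j * B * star (U j) = B)
    (x y : Fin n → ℂ)
    (hx : ∑ j, ‖x j‖ ^ 2 ≤ 1) :
    ‖1 - ∑ j, x j * starRingEnd ℂ (y j)‖ * ‖B‖ ≤
      ∑ j, (‖(U j - x j • (1 : H →L[ℂ] H)) * B‖ +
            ‖B * (star (U j) - starRingEnd ℂ (y j) • (1 : H →L[ℂ] H))‖) := by
  -- each `U j` is a contraction
  have hU : ∀ j, ‖U j‖ ≤ 1 := by
    intro j
    have hterm : ∀ k, (0 : H →L[ℂ] H) ≤ U k * star (U k) := fun k => mul_star_self_nonneg _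
    have hle : U j * star (U j) ≤ 1 := by
      rw [← hsum]
      exact Finset.single_le_sum (fun k _ => hterm k) (Finset.mem_univ j)
    have h1 : ‖U j * star (U j)‖ ≤ 1 := by
      exact le_trans (CStarAlgebra.norm_le_norm_of_nonneg_of_le (hterm j) hle)
        (by simpa [ContinuousLinearMap.one_def] using ContinuousLinearMap.norm_id_le)
    have h2 : ‖U j‖ * ‖U j‖ ≤ 1 := by
      rwa [CStarRing.norm_self_mul_star] at h1
    nlinarith [norm_nonneg (U j)]
  have hxj : ∀ j, ‖x j‖ ≤ 1 := by
    intro j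
    have h1 : ‖x j‖ ^ 2 ≤ 1 := le_trans
      (Finset.single_le_sum (f := fun k => ‖x k‖ ^ 2) (fun k _ => by positivity) (Finset.mem_univ j)) hx
    nlinarith [norm_nonneg (x j)]
  set c := ∑ j, x j * starRingEnd ℂ (y j) with hc
  have key : (1 - c) • B =
      ∑ j, ((U j - x j • (1 : H →L[ℂ] H)) * B * star (U j)
        + x j • (B * (star (U j) - starRingEnd ℂ (y j) • (1 : H →L[ℂ] H)))) := by
    have : ∀ j, (U j - x j • (1 : H →L[ℂ] H)) * B * star (U j)
        + x j • (B * (star (U j) - starRingEnd ℂ (y j) • (1 : H →L[ℂ] H)))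
        = U j * B * star (U j) - (x j * starRingEnd ℂ (y j)) • B := by
      intro j
      simp only [sub_mul, smul_mul_assoc, one_mul, mul_sub, smul_sub, mul_smul, mul_smul_comm, mul_one]
      abel
    rw [Finset.sum_congr rfl fun j _ => this j, Finset.sum_sub_distrib, hB,
      ← Finset.sum_smul, ← hc, sub_smul, one_smul]
  calc ‖1 - c‖ * ‖B‖ = ‖(1 - c) • B‖ := (norm_smul _ _).symm
    _ = ‖∑ j, ((U j - x j • (1 : H →L[ℂ] H)) * B * star (U j)
        + x j • (B * (star (U j) - starRingEnd ℂ (y j) • (1 : H →L[ℂ] H))))‖ := by rw [key]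
    _ ≤ ∑ j, ‖(U j - x j • (1 : H →L[ℂ] H)) * B * star (U j)
        + x j • (B * (star (U j) - starRingEnd ℂ (y j) • (1 : H →L[ℂ] H)))‖ :=
      norm_sum_le _ _
    _ ≤ ∑ j, (‖(U j - x j • (1 : H →L[ℂ] H)) * B‖ +
            ‖B * (star (U j) - starRingEnd ℂ (y j) • (1 : H →L[ℂ] H))‖) := by
      refine Finset.sum_le_sum fun j _ => ?_
      refine le_trans (norm_add_le _ _) (add_le_add ?_ ?_)
      · calc ‖(U j - x j • (1 : H →L[ℂ] H)) * B * star (U j)‖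
            ≤ ‖(U j - x j • (1 : H →L[ℂ] H)) * B‖ * ‖star (U j)‖ := norm_mul_le _ _
          _ ≤ ‖(U j - x j • (1 : H →L[ℂ] H)) * B‖ * 1 := by
              gcongr; rw [norm_star]; exact hU j
          _ = _ := mul_one _
      · calc ‖x j • (B * (star (U j) - starRingEnd ℂ (y j) • (1 : H →L[ℂ] H)))‖
            = ‖x j‖ * ‖B * (star (U j) - starRingEnd ℂ (y j) • (1 : H →L[ℂ] H))‖ :=
              norm_smul _ _
          _ ≤ 1 * ‖B * (star (U j) - starRingEnd ℂ (y j) • (1 : H →L[ℂ] H))‖ := by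
              gcongr; exact hxj j
          _ = _ := one_mul _
end

section
/- Let S_1, …, S_n be a row isometry on a complex Hilbert space H, let N ⊆ H be a closed subspace that is coinvariant for each S_j, and let P be the orthogonal projection onto N. Assume the compressions U_j = P S_j|_N form a spherical unitary on N (pairwise commuting normal operators with ∑_{j=1}^n U_j U_j* = I_N). Then ∑_{j=1}^n (I − P) S_j P S_j* P = 0. (In block notation S_j = [[U_j, 0], [D_j, E_j]] with respect to H = N ⊕ N^⊥, this says ∑_{j=1}^n D_j U_j* = 0.) -/
/-!
Write `P` for the projection onto `N` and let `w ∈ N`. Coinvariance gives `Sⱼ* w ∈ N`, hence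
`Uⱼ* w = Sⱼ* w`, and `∑ Uⱼ Uⱼ* = I` turns into `‖w‖² = ∑ ‖Sⱼ* w‖²`. For a row isometry,
`v = ∑ Sⱼ Sⱼ* w` satisfies `‖v‖² = ∑ ‖Sⱼ* w‖² = re ⟪v, w⟫`, so `‖v - w‖² = 0` and `v = w ∈ N`.
Applied to `w = P x`, the sum in the theorem sends `x` to `(I - P) v = 0`.
-/

open ContinuousLinearMap RCLike

section

variable {𝕜 E : Type*} [RCLike 𝕜] [NormedAddCommGroup E] [InnerProductSpace 𝕜 E]

theorem eq_of_norm_sq_eq_re_inner {v w : E} (hv : ‖v‖ ^ 2 = re (inner 𝕜 v w))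
    (hw : ‖w‖ ^ 2 = re (inner 𝕜 v w)) : v = w := by
  have : ‖v - w‖ ^ 2 = 0 := by rw [@norm_sub_sq 𝕜]; linarith
  exact sub_eq_zero.mp (norm_eq_zero.mp (pow_eq_zero_iff two_ne_zero |>.mp this))

variable [CompleteSpace E] {ι : Type*}

def IsRowIsometry [DecidableEq ι] (S : ι → E →L[𝕜] E) : Prop :=
  ∀ i j, star (S i) * S j = if i = j then 1 else 0

namespace IsRowIsometry

variable [DecidableEq ι] {S : ι → E →L[𝕜] E}

theorem inner_apply_apply (hS : IsRowIsometry S) (i j : ι) (x y : E) :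
    inner 𝕜 (S i x) (S j y) = if i = j then inner 𝕜 x y else 0 := by
  have := congrArg (fun A : E →L[𝕜] E => inner 𝕜 x (A y)) (hS i j)
  simp only [star_eq_adjoint, mul_apply_eq_comp, adjoint_inner_right] at this
  rw [this]
  split_ifs <;> simp

variable [Fintype ι]

theorem norm_sum_apply_sq (hS : IsRowIsometry S) (z : ι → E) :
    ‖∑ i, S i (z i)‖ ^ 2 = ∑ i, ‖z i‖ ^ 2 := by
  have : inner 𝕜 (∑ i, S i (z i)) (∑ i, S i (z i)) = ∑ i, inner 𝕜 (z i) (z i) := by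
    simp only [sum_inner, inner_sum, hS.inner_apply_apply, Finset.sum_ite_eq', Finset.mem_univ,
      if_true]
  simp only [inner_self_eq_norm_sq_to_K] at this
  exact_mod_cast this

theorem sum_apply_adjoint_apply_eq_self (hS : IsRowIsometry S) {w : E}
    (hw : ∑ i, ‖adjoint (S i) w‖ ^ 2 = ‖w‖ ^ 2) : ∑ i, S i (adjoint (S i) w) = w := by
  have hre : re (inner 𝕜 (∑ i, S i (adjoint (S i) w)) w) = ∑ i, ‖adjoint (S i) w‖ ^ 2 := by
    simp only [sum_inner, map_sum]
    exact Finset.sum_congr rfl fun i _ => by rw [← adjoint_inner_right, inner_self_eq_norm_sq]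
  refine eq_of_norm_sq_eq_re_inner (𝕜 := 𝕜) ?_ ?_
  · rw [hre, hS.norm_sum_apply_sq]
  · rw [hre, hw]

end IsRowIsometry

theorem norm_sq_eq_sum_norm_adjoint_apply_sq [Fintype ι] {T : ι → E →L[𝕜] E}
    (hT : ∑ i, T i * star (T i) = 1) (w : E) : ‖w‖ ^ 2 = ∑ i, ‖adjoint (T i) w‖ ^ 2 := by
  have := congrArg (fun A : E →L[𝕜] E => re (inner 𝕜 (A w) w)) hT
  simpa [sum_apply, sum_inner, star_eq_adjoint, ← adjoint_inner_right, inner_self_eq_norm_sq]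
    using this.symm

theorem Submodule.coe_adjoint_compression_apply (N : Submodule 𝕜 E) [CompleteSpace N]
    {T : E →L[𝕜] E} (hT : ∀ x ∈ N, adjoint T x ∈ N) (w : N) :
    (adjoint (N.orthogonalProjectionOnto ∘L T ∘L N.subtypeL) w : E) = adjoint T w := by
  rw [adjoint_comp, adjoint_comp, Submodule.adjoint_subtypeL,
    Submodule.adjoint_orthogonalProjectionOnto]
  exact N.starProjection_eq_self_iff.mpr (hT w w.2)

end

open ContinuousLinearMap in
theorem row_isometric_dilation_of_spherical_unitary_DUstar_general
    {H : Type*} [NormedAddCommGroup H] [InnerProductSpace ℂ H] [CompleteSpace H]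
    {n : ℕ} (S : Fin n → H →L[ℂ] H)
    (hrow : ∀ i j, star (S i) * S j = if i = j then 1 else 0)
    (N : Submodule ℂ H) [CompleteSpace N]
    (hcoinv : ∀ j, ∀ x ∈ N, adjoint (S j) x ∈ N)
    -- the compressions `Uⱼ = P_N Sⱼ|_N` :
    (U : Fin n → N →L[ℂ] N)
    (hU : ∀ j, U j = N.orthogonalProjectionOnto ∘L (S j) ∘L N.subtypeL)
    (hUsum : ∑ j, U j * star (U j) = 1) :
    ∑ j, ((1 - N.subtypeL ∘L N.orthogonalProjectionOnto) ∘L S j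
            ∘L (N.subtypeL ∘L N.orthogonalProjectionOnto) ∘L star (S j)
            ∘L (N.subtypeL ∘L N.orthogonalProjectionOnto)) = 0 := by
  ext x
  set P := N.subtypeL ∘L N.orthogonalProjectionOnto
  set w : N := N.orthogonalProjectionOnto x
  have hUadj : ∀ j, (adjoint (U j) w : H) = adjoint (S j) w := fun j => by
    rw [hU j]; exact N.coe_adjoint_compression_apply (hcoinv j) w
  have hPadj : ∀ j, P (adjoint (S j) w) = adjoint (S j) w :=
    fun j => N.starProjection_eq_self_iff.mpr (hcoinv j w w.2)
  have hnorm : ∑ j, ‖adjoint (S j) (w : H)‖ ^ 2 = ‖(w : H)‖ ^ 2 := by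
    simp only [← hUadj, Submodule.norm_coe, ← norm_sq_eq_sum_norm_adjoint_apply_sq hUsum w]
  calc (∑ j, (1 - P) ∘L S j ∘L P ∘L star (S j) ∘L P) x
      = (1 - P) (∑ j, S j (adjoint (S j) w)) := by
        simp only [sum_apply, map_sum, comp_apply, star_eq_adjoint]
        exact Finset.sum_congr rfl fun j _ => by rw [← hPadj j]; rfl
    _ = (1 - P) w := by rw [IsRowIsometry.sum_apply_adjoint_apply_eq_self hrow hnorm]
    _ = 0 := by simp [P]

open ContinuousLinearMap in
/-- From the proof of Lemma 3.3 of Davidson–Le: if `S` is a row isometry, `N` a coinvariant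
closed subspace whose compressions `Uⱼ = P Sⱼ|_N` form a spherical unitary, then, writing
`Sⱼ = [[Uⱼ, 0], [Dⱼ, Eⱼ]]` with respect to `H = N ⊕ N^⊥`, one has `∑ Dⱼ Uⱼ* = 0`; i.e.
`∑ (I − P) Sⱼ P Sⱼ* P = 0`. -/
theorem row_isometric_dilation_of_spherical_unitary_DUstar
    {H : Type*} [NormedAddCommGroup H] [InnerProductSpace ℂ H] [CompleteSpace H]
    {n : ℕ} (S : Fin n → H →L[ℂ] H)
    (hrow : ∀ i j, star (S i) * S j = if i = j then 1 else 0)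
    (N : Submodule ℂ H) [CompleteSpace N]
    (hcoinv : ∀ j, ∀ x ∈ N, adjoint (S j) x ∈ N)
    -- the compressions `Uⱼ = P_N Sⱼ|_N` :
    (U : Fin n → N →L[ℂ] N)
    (hU : ∀ j, U j = N.orthogonalProjectionOnto ∘L (S j) ∘L N.subtypeL)
    -- `U` is a spherical unitary :
    (hUcomm : ∀ i j, U i * U j = U j * U i)
    (hUnormal : ∀ i, U i * star (U i) = star (U i) * U i)
    (hUsum : ∑ j, U j * star (U j) = 1) :
    ∑ j, ((1 - N.subtypeL ∘L N.orthogonalProjectionOnto) ∘L S j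
            ∘L (N.subtypeL ∘L N.orthogonalProjectionOnto) ∘L star (S j)
            ∘L (N.subtypeL ∘L N.orthogonalProjectionOnto)) = 0 :=
  row_isometric_dilation_of_spherical_unitary_DUstar_general S hrow N hcoinv U hU hUsum
end

section
/- Let H_1 and H_2 be complex Hilbert spaces. Let V_1, …, V_n be bounded operators on H_1 that are pure in the sense that ⋂_{k ≥ 1} (closed linear span of ⋃_{|w| = k} range(V_w)) = {0}, where w ranges over words of length k in the free monoid on {1, …, n}. Let S_1, …, S_n be bounded operators on H_2 with ∑_{j=1}^n S_j S_j* = I. If B : H_2 → H_1 is a bounded operator satisfying V_j B = B S_j for all 1 ≤ j ≤ n, then B = 0. -/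
/-!
Writing `1 = ∑ Sⱼ Sⱼ*` and using `B Sⱼ = Vⱼ B` gives `B = ∑ Vⱼ B Sⱼ*`. Iterating, the range of `B`
lies in the span of the ranges of all words `V_w` of length `k`, for every `k`, hence in the
intersection of their closures, which purity says is `{0}`.
-/

open ContinuousLinearMap

section Intertwiner

variable {R M N : Type*} [Semiring R] [TopologicalSpace M] [AddCommMonoid M] [Module R M]
  {n : ℕ}

def wordRange (V : Fin n → M →L[R] M) (k : ℕ) : Submodule R M :=
  ⨆ w : Fin k → Fin n, LinearMap.range ((((List.ofFn w).map V).prod : M →L[R] M) : M →ₗ[R] M)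

theorem wordRange_zero (V : Fin n → M →L[R] M) : wordRange V 0 = ⊤ :=
  eq_top_iff.2 fun x _ => Submodule.mem_iSup_of_mem Fin.elim0 ⟨x, rfl⟩

theorem map_wordRange_le (V : Fin n → M →L[R] M) (k : ℕ) (j : Fin n) :
    (wordRange V k).map (V j : M →ₗ[R] M) ≤ wordRange V (k + 1) := by
  rw [wordRange, Submodule.map_iSup]
  refine iSup_le fun w => ?_
  rw [← LinearMap.range_comp]
  refine le_trans (le_of_eq ?_) (le_iSup _ (Fin.cons j w : Fin (k + 1) → Fin n))
  simp [List.ofFn_succ, Module.End.mul_eq_comp]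

variable [ContinuousAdd M] [TopologicalSpace N] [AddCommMonoid N] [Module R N] [ContinuousAdd N]

theorem eq_sum_comp_of_intertwines {ι : Type*} [Fintype ι] {V : ι → M →L[R] M}
    {S T : ι → N →L[R] N} (hST : ∑ j, S j * T j = 1) {B : N →L[R] M}
    (hB : ∀ j, V j ∘L B = B ∘L S j) :
    B = ∑ j, V j ∘L B ∘L T j := by
  calc B = B ∘L (∑ j, S j * T j : N →L[R] N) := by rw [hST]; rfl
    _ = ∑ j, V j ∘L B ∘L T j := by
      rw [comp_finsetSum]
      refine Finset.sum_congr rfl fun j _ => ?_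
      rw [mul_def, ← comp_assoc, ← hB, comp_assoc]

theorem range_le_wordRange_of_intertwines {V : Fin n → M →L[R] M} {S T : Fin n → N →L[R] N}
    (hST : ∑ j, S j * T j = 1) {B : N →L[R] M} (hB : ∀ j, V j ∘L B = B ∘L S j) (k : ℕ) :
    LinearMap.range (B : N →ₗ[R] M) ≤ wordRange V k := by
  induction k with
  | zero => exact wordRange_zero V ▸ le_top
  | succ k ih =>
    rintro _ ⟨x, rfl⟩
    have hBx : B x = ∑ j, V j (B (T j x)) := by
      conv_lhs => rw [eq_sum_comp_of_intertwines hST hB]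
      simp
    rw [coe_coe, hBx]
    exact Submodule.sum_mem _ fun j _ =>
      map_wordRange_le V k j (Submodule.mem_map_of_mem (ih (LinearMap.mem_range_self _ _)))

end Intertwiner

open ContinuousLinearMap in
theorem intertwiner_into_pure_part_vanishes_general
    {H₁ H₂ : Type*}
    [NormedAddCommGroup H₁] [InnerProductSpace ℂ H₁]
    [NormedAddCommGroup H₂] [InnerProductSpace ℂ H₂] [CompleteSpace H₂]
    {n : ℕ} (V : Fin n → H₁ →L[ℂ] H₁) (S : Fin n → H₂ →L[ℂ] H₂)
    (hpure : ⨅ (k : ℕ) (_ : 1 ≤ k),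
        (⨆ w : Fin k → Fin n,
          LinearMap.range ((((List.ofFn w).map V).prod : H₁ →L[ℂ] H₁) : H₁ →ₗ[ℂ] H₁)).topologicalClosure = ⊥)
    (hS : ∑ j, S j * star (S j) = 1)
    (B : H₂ →L[ℂ] H₁)
    (hB : ∀ j, V j ∘L B = B ∘L S j) :
    B = 0 := by
  ext x
  have hx : B x ∈ (⊥ : Submodule ℂ H₁) := by
    rw [← hpure]
    simp only [Submodule.mem_iInf]
    exact fun k _ => Submodule.le_topologicalClosure _
      (range_le_wordRange_of_intertwines hS hB k (LinearMap.mem_range_self _ x))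
  simpa using hx

open ContinuousLinearMap in
/-- If `V₁, …, Vₙ` is pure, i.e. `⋂_{k ≥ 1} span closure (⋃_{|w|=k} ran V_w) = {0}`,
`∑ Sⱼ Sⱼ* = 1`, and `Vⱼ B = B Sⱼ` for all `j`, then `B = 0`. -/
theorem intertwiner_into_pure_part_vanishes
    {H₁ H₂ : Type*}
    [NormedAddCommGroup H₁] [InnerProductSpace ℂ H₁] [CompleteSpace H₁]
    [NormedAddCommGroup H₂] [InnerProductSpace ℂ H₂] [CompleteSpace H₂]
    {n : ℕ} (V : Fin n → H₁ →L[ℂ] H₁) (S : Fin n → H₂ →L[ℂ] H₂)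
    (hpure : ⨅ (k : ℕ) (_ : 1 ≤ k),
        (⨆ w : Fin k → Fin n,
          LinearMap.range ((((List.ofFn w).map V).prod : H₁ →L[ℂ] H₁) : H₁ →ₗ[ℂ] H₁)).topologicalClosure = ⊥)
    (hS : ∑ j, S j * star (S j) = 1)
    (B : H₂ →L[ℂ] H₁)
    (hB : ∀ j, V j ∘L B = B ∘L S j) :
    B = 0 :=
  intertwiner_into_pure_part_vanishes_general V S hpure hS B hB
end
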